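/- If G is a finite simple 2P_3-free graph, M is an acyclic matching in G, and T is a connected component of G(M) that is not isomorphic to K_2, then a longest path in T has at least 4 and at most 6 vertices. -/

import Mathlib

/-!
Paths in a forest are induced, so in the acyclic graph `G(M)` a path `x₀ ⋯ x₆` would contain the
induced `2P₃` formed by `x₀x₁x₂` and `x₄x₅x₆`; hence paths have at most six vertices.
Every vertex of `G(M)` has its `M`-partner in `G(M)`, so `M` is a perfect matching of `G(M)`.
If a component contains a matched edge `vw` and some third vertex, an edge `vd` (say) leaves
`{v, w}`, and with `e` the partner of `d` the walk `w v d e` is a path on four vertices.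
-/

open SimpleGraph

/-- A graph `G` is *2P₃-free* if it contains no induced subgraph isomorphic to the
disjoint union of two paths on three vertices.  (Graph embeddings `↪g` are exactly
induced-subgraph copies.) -/
def TwoP3Free {V : Type*} (G : SimpleGraph V) : Prop :=
  IsEmpty ((pathGraph 3 ⊕g pathGraph 3) ↪g G)

namespace SimpleGraph

variable {V : Type*} {G : SimpleGraph V}

lemma IsAcyclic.eq_add_one_of_adj_getVert (hG : G.IsAcyclic) {u v : V} {p : G.Walk u v}
    (hp : p.IsPath) {i j : ℕ} (hij : i < j) (hj : j ≤ p.length)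
    (hadj : G.Adj (p.getVert i) (p.getVert j)) : j = i + 1 := by
  have hmem : p.getVert j ∈ (p.drop i).support := by
    simpa [Walk.drop_getVert, Nat.add_sub_cancel' hij.le] using
      (p.drop i).getVert_mem_support (j - i)
  have hsnd : p.getVert j = p.getVert (i + 1) := by
    rw [hG.eq_snd_of_adj_start (hp.drop i) hadj hmem, Walk.snd, Walk.drop_getVert]
  exact hp.getVert_injOn hj (show i + 1 ≤ p.length by omega) hsnd

lemma IsAcyclic.adj_getVert_iff (hG : G.IsAcyclic) {u v : V} {p : G.Walk u v} (hp : p.IsPath)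
    {i j : ℕ} (hi : i ≤ p.length) (hj : j ≤ p.length) :
    G.Adj (p.getVert i) (p.getVert j) ↔ i + 1 = j ∨ j + 1 = i := by
  refine ⟨fun hadj ↦ ?_, ?_⟩
  · rcases lt_trichotomy i j with hij | rfl | hji
    · exact .inl (hG.eq_add_one_of_adj_getVert hp hij hj hadj).symm
    · exact absurd rfl hadj.ne
    · exact .inr (hG.eq_add_one_of_adj_getVert hp hji hi hadj.symm).symm
  · rintro (rfl | rfl)
    · exact p.adj_getVert_succ (by omega)
    · exact (p.adj_getVert_succ (by omega)).symm

def IsAcyclic.pathGraphEmbedding (hG : G.IsAcyclic) {u v : V} {p : G.Walk u v} (hp : p.IsPath)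
    (n : ℕ) (hn : n ≤ p.length) : pathGraph (n + 1) ↪g G where
  toFun i := p.getVert i
  inj' i j h := Fin.ext <| hp.getVert_injOn (show (i : ℕ) ≤ p.length by omega)
    (show (j : ℕ) ≤ p.length by omega) h
  map_rel_iff' {i j} := by
    change G.Adj (p.getVert i) (p.getVert j) ↔ _
    rw [hG.adj_getVert_iff hp (by omega) (by omega), pathGraph_adj]

def twoP3EmbeddingP7 : pathGraph 3 ⊕g pathGraph 3 ↪g pathGraph 7 where
  toFun := Sum.elim (Fin.castLE (by norm_num)) (Fin.natAdd 4)
  inj' := by decide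
  map_rel_iff' := by
    rintro (i | i) (j | j) <;>
      simp only [Function.Embedding.coeFn_mk, Sum.elim_inl, Sum.elim_inr, Fin.val_castLE,
        Fin.val_natAdd, pathGraph_adj, sum_adj, iff_false, not_or] <;> omega

lemma nonempty_induce_pair_iso_top {v w : V} (h : G.Adj v w) :
    Nonempty (G.induce {v, w} ≃g (⊤ : SimpleGraph (Fin 2))) := by
  have htop : G.induce {v, w} = ⊤ := by
    ext ⟨x, hx⟩ ⟨y, hy⟩
    simp only [Set.mem_insert_iff, Set.mem_singleton_iff] at hx hy
    rcases hx with rfl | rfl <;> rcases hy with rfl | rfl <;> simp [h, h.symm, h.ne, h.ne.symm]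
  rw [htop]
  exact ⟨Iso.completeGraph (Finite.equivFinOfCardEq (by simp [Set.ncard_pair h.ne]))⟩

lemma ConnectedComponent.exists_isPath_induce_supp (c : G.ConnectedComponent) {u v : V}
    {p : G.Walk u v} (hp : p.IsPath) (hu : u ∈ c.supp) :
    ∃ (u' v' : c.supp) (q : (G.induce c.supp).Walk u' v'), q.IsPath ∧ q.length = p.length := by
  classical
  have hsupp : ∀ x ∈ p.support, x ∈ c.supp := fun x hx ↦
    (ConnectedComponent.sound (p.takeUntil x hx).reachable).symm.trans hu
  refine ⟨_, _, p.induce c.supp hsupp, ?_, ?_⟩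
  · rw [← Walk.isPath_map_iff_of_injective (f := (Embedding.induce (G := G) c.supp).toHom)
      (Embedding.induce (G := G) c.supp).injective, Walk.map_induce]
    exact hp
  · rw [← Walk.length_map (Embedding.induce (G := G) c.supp).toHom, Walk.map_induce]
    rfl

namespace Subgraph

lemma IsMatching.exists_isPath_length_three {M : G.Subgraph} (hM : M.IsMatching) {v w d e : V}
    (hwv : M.Adj w v) (hvd : G.Adj v d) (hdw : d ≠ w) (hde : M.Adj d e) :
    ∃ p : G.Walk w e, p.IsPath ∧ p.length = 3 := by
  have hwe : w ≠ e := by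
    rintro rfl
    exact hvd.ne (hM.eq_of_adj_right hde hwv.symm).symm
  have hve : v ≠ e := by
    rintro rfl
    exact hdw (hM.eq_of_adj_right hde hwv)
  refine ⟨.cons (M.adj_sub hwv) (.cons hvd (.cons (M.adj_sub hde) .nil)), ?_, rfl⟩
  simp [Walk.cons_isPath_iff, (M.adj_sub hwv).ne, hvd.ne, (M.adj_sub hde).ne, hdw.symm, hwe, hve]

lemma IsMatching.isPerfectMatching_comap_induce {M : G.Subgraph} (hM : M.IsMatching) :
    (M.comap (Embedding.induce M.verts).toHom).IsPerfectMatching := by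
  refine isPerfectMatching_iff.2 fun v ↦ ?_
  obtain ⟨w, hvw, huniq⟩ := hM v.2
  exact ⟨⟨w, M.edge_vert hvw.symm⟩, ⟨M.adj_sub hvw, hvw⟩, fun y hy ↦ Subtype.ext (huniq _ hy.2)⟩

lemma IsPerfectMatching.exists_isPath_length_three {M : G.Subgraph} (hM : M.IsPerfectMatching)
    (c : G.ConnectedComponent) (hc : ¬ Nonempty (G.induce c.supp ≃g (⊤ : SimpleGraph (Fin 2)))) :
    ∃ (u v : V) (p : G.Walk u v), p.IsPath ∧ p.length = 3 ∧ u ∈ c.supp := by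
  obtain ⟨v, hv⟩ := c.nonempty_supp
  obtain ⟨w, hvw, -⟩ := isPerfectMatching_iff.1 hM v
  have hw : w ∈ c.supp := c.mem_supp_of_adj_mem_supp hv (M.adj_sub hvw)
  obtain ⟨x, hx, hxvw⟩ : ∃ x ∈ c.supp, x ∉ ({v, w} : Set V) := by
    by_contra! hsub
    have hpair : c.supp = {v, w} :=
      Set.Subset.antisymm hsub (Set.insert_subset_iff.2 ⟨hv, Set.singleton_subset_iff.2 hw⟩)
    exact hc (hpair ▸ nonempty_induce_pair_iso_top (M.adj_sub hvw))
  obtain ⟨⟨⟨b, d⟩, hbd⟩, -, hb, hd⟩ :=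
    (c.reachable_of_mem_supp hv hx).some.exists_boundary_dart {v, w} (by simp) hxvw
  obtain ⟨e, hde, -⟩ := isPerfectMatching_iff.1 hM d
  simp only [Set.mem_insert_iff, Set.mem_singleton_iff, not_or] at hb hd
  rcases hb with rfl | rfl
  · obtain ⟨p, hp, hlen⟩ := hM.1.exists_isPath_length_three hvw.symm hbd hd.2 hde
    exact ⟨w, e, p, hp, hlen, hw⟩
  · obtain ⟨p, hp, hlen⟩ := hM.1.exists_isPath_length_three hvw hbd hd.1 hde
    exact ⟨v, e, p, hp, hlen, hv⟩

end Subgraph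

end SimpleGraph

lemma TwoP3Free.of_embedding {V W : Type*} {G : SimpleGraph V} {G' : SimpleGraph W}
    (f : G' ↪g G) (h : TwoP3Free G) : TwoP3Free G' :=
  ⟨fun e ↦ h.false (f.comp e)⟩

lemma TwoP3Free.length_le_five {V : Type*} {G : SimpleGraph V} (hfree : TwoP3Free G)
    (hG : G.IsAcyclic) {u v : V} {p : G.Walk u v} (hp : p.IsPath) : p.length ≤ 5 := by
  by_contra! h
  exact hfree.false ((hG.pathGraphEmbedding hp 6 h).comp twoP3EmbeddingP7)

theorem twoP3Free_acyclicMatching_longest_path_general {V : Type*}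
    (G : SimpleGraph V) (hfree : TwoP3Free G) (M : G.Subgraph) (hM : M.IsMatching)
    (hac : (G.induce M.verts).IsAcyclic)
    (c : (G.induce M.verts).ConnectedComponent)
    (hc : ¬ Nonempty (((G.induce M.verts).induce c.supp) ≃g (⊤ : SimpleGraph (Fin 2)))) :
    (∃ (u v : c.supp) (p : ((G.induce M.verts).induce c.supp).Walk u v),
        p.IsPath ∧ 3 ≤ p.length) ∧
    (∀ (u v : c.supp) (p : ((G.induce M.verts).induce c.supp).Walk u v),
        p.IsPath → p.length ≤ 5) := by
  refine ⟨?_, fun u v p hp ↦ ?_⟩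
  · obtain ⟨u, v, p, hp, hlen, hu⟩ :=
      hM.isPerfectMatching_comap_induce.exists_isPath_length_three c hc
    obtain ⟨u', v', q, hq, hqlen⟩ := c.exists_isPath_induce_supp hp hu
    exact ⟨u', v', q, hq, hqlen.trans hlen |>.ge⟩
  · have hemb := (Embedding.induce (G := G) M.verts).comp (Embedding.induce c.supp)
    exact (hfree.of_embedding hemb).length_le_five (hac.induce c.supp) hp

/-- If `G` is a finite simple `2P₃`-free graph, `M` is an acyclic
matching in `G`, and `T` is a connected component of `G(M)` that is not isomorphic
to `K₂`, then a longest path in `T` has at least `4` and at most `6` vertices: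
there is a path in `T` on at least `4` vertices (length `≥ 3`), and every path in `T`
has at most `6` vertices (length `≤ 5`). -/
theorem twoP3Free_acyclicMatching_longest_path {V : Type*} [Fintype V]
    (G : SimpleGraph V) (hfree : TwoP3Free G) (M : G.Subgraph) (hM : M.IsMatching)
    (hac : (G.induce M.verts).IsAcyclic)
    (c : (G.induce M.verts).ConnectedComponent)
    (hc : ¬ Nonempty (((G.induce M.verts).induce c.supp) ≃g (⊤ : SimpleGraph (Fin 2)))) :
    (∃ (u v : c.supp) (p : ((G.induce M.verts).induce c.supp).Walk u v),
        p.IsPath ∧ 3 ≤ p.length) ∧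
    (∀ (u v : c.supp) (p : ((G.induce M.verts).induce c.supp).Walk u v),
        p.IsPath → p.length ≤ 5) :=
  twoP3Free_acyclicMatching_longest_path_general G hfree M hM hac c hc
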